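/- Let (K^{(m)})_{m≥0} be a Markov chain on ℕ with K^{(0)} finite, transition p(K^{(m+1)} = k | K^{(m)}) = Poisson(k; λ(K^{(m)})) where λ(K) = α Σ_{k'=1}^{K} β/(k'+β−1) for fixed α, β > 0. Then P(∃ m : K^{(m)} = 0) = 1, i.e., the chain is absorbed at 0 with probability one. -/

import Mathlib

open Finset MeasureTheory

/-- The CIBP mean function `λ(K) = α ∑_{k=1}^K β/(k+β-1)`. -/
noncomputable def cibpLam (α β : ℝ) (K : ℕ) : ℝ :=
  α * ∑ k ∈ Finset.range K, β / ((k : ℝ) + 1 + β - 1)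

/-- The Poisson probability mass `Poisson(k; r) = exp(-r) r^k / k!`. -/
noncomputable def poisProb (r : ℝ) (k : ℕ) : ℝ :=
  Real.exp (-r) * r ^ k / (Nat.factorial k)

/-!
A Foster–Lyapunov argument for the chain killed at `0`. With `V j = j + D`, one step from any
positive state `j` gives `E[V K' + 1/2; K' > 0] ≤ V j`: for large `j` because `λ(j)/j → 0`
(a Cesàro mean of the increments `αβ/(k+β) → 0`), and for the finitely many small `j` because
the killing probability `exp (-λ j)` is bounded below, which a large `D` converts into drift.
Iterating, `(1/2) ∑_{i=1}^{M} P_j(no absorption in i steps) ≤ V j`, so surviving forever from `j`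
has probability at most `2 V j / M` for every `M`.
-/

open Filter Topology
open scoped ENNReal

lemma poisProb_nonneg {r : ℝ} (hr : 0 ≤ r) (k : ℕ) : 0 ≤ poisProb r k := by
  unfold poisProb; positivity

lemma hasSum_poisProb {r : ℝ} (hr : 0 ≤ r) : HasSum (poisProb r) 1 :=
  ProbabilityTheory.hasSum_one_poissonMeasure ⟨r, hr⟩

lemma succ_mul_poisProb_succ (r : ℝ) (k : ℕ) :
    ((k : ℝ) + 1) * poisProb r (k + 1) = r * poisProb r k := by
  unfold poisProb
  rw [Nat.factorial_succ, pow_succ]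
  push_cast
  field_simp

lemma hasSum_poisProb_succ_mul {r : ℝ} (hr : 0 ≤ r) (E : ℝ) :
    HasSum (fun k : ℕ => poisProb r (k + 1) * ((k : ℝ) + 1 + E))
      (r + E * (1 - Real.exp (-r))) := by
  have hpos : HasSum (fun k => poisProb r (k + 1)) (1 - Real.exp (-r)) := by
    simpa [poisProb] using (hasSum_nat_add_iff' 1).2 (hasSum_poisProb hr)
  have hsplit : (fun k : ℕ => poisProb r (k + 1) * ((k : ℝ) + 1 + E)) =
      fun k => r * poisProb r k + E * poisProb r (k + 1) := by
    funext k
    rw [← succ_mul_poisProb_succ]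
    ring
  simpa only [hsplit, mul_one] using ((hasSum_poisProb hr).mul_left r).add (hpos.mul_left E)

lemma tsum_ofReal_poisProb_succ_mul {r D c : ℝ} (hr : 0 ≤ r) (hD : 0 ≤ D) (hc : 0 ≤ c) :
    ∑' k : ℕ, ENNReal.ofReal (poisProb r (k + 1)) *
        (ENNReal.ofReal ((k + 1 : ℕ) + D) + ENNReal.ofReal c) =
      ENNReal.ofReal (r + (D + c) * (1 - Real.exp (-r))) := by
  have hsum := hasSum_poisProb_succ_mul hr (D + c)
  rw [← hsum.tsum_eq, ENNReal.ofReal_tsum_of_nonneg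
    (fun k => mul_nonneg (poisProb_nonneg hr _) (by positivity)) hsum.summable]
  refine tsum_congr fun k => ?_
  rw [← ENNReal.ofReal_add (by positivity) hc, ← ENNReal.ofReal_mul (poisProb_nonneg hr _)]
  push_cast
  ring_nf

lemma cibpLam_nonneg {α β : ℝ} (hα : 0 ≤ α) (hβ : 0 ≤ β) (j : ℕ) : 0 ≤ cibpLam α β j := by
  unfold cibpLam
  refine mul_nonneg hα (sum_nonneg fun k _ => div_nonneg hβ ?_)
  linarith [(k.cast_nonneg : (0 : ℝ) ≤ k)]

lemma eventually_cibpLam_le_half (α β : ℝ) : ∀ᶠ j : ℕ in atTop, cibpLam α β j ≤ j / 2 := by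
  have hterm : Tendsto (fun k : ℕ => α * (β / ((k : ℝ) + 1 + β - 1))) atTop (𝓝 0) := by
    have hden : Tendsto (fun k : ℕ => (k : ℝ) + 1 + β - 1) atTop atTop := by
      simpa [add_sub_assoc, add_assoc] using
        tendsto_atTop_add_const_right atTop (1 + β - 1) tendsto_natCast_atTop_atTop
    simpa using (tendsto_const_nhds.div_atTop hden).const_mul α
  have hmean := hterm.cesaro.eventually (gt_mem_nhds (show (0 : ℝ) < 1 / 2 by norm_num))
  filter_upwards [hmean, eventually_gt_atTop 0] with j hj hj0
  have hj0' : (0 : ℝ) < j := by exact_mod_cast hj0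
  rw [← mul_sum, inv_mul_lt_iff₀ hj0'] at hj
  unfold cibpLam
  linarith

/-- `r + E * (1 - exp (-r))` is `E[K' + E; K' > 0]` for `K' ~ Poisson r`
(`hasSum_poisProb_succ_mul`). -/
lemma exists_drift_const {r : ℕ → ℝ} (hr0 : ∀ j, 0 ≤ r j) (hr : ∀ᶠ j in atTop, r j ≤ j / 2) :
    ∃ D : ℝ, 0 ≤ D ∧ ∀ j : ℕ, 1 ≤ j → r j + (D + 1 / 2) * (1 - Real.exp (-r j)) ≤ j + D := by
  obtain ⟨N, hN⟩ := eventually_atTop.1 hr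
  set L := ∑ j ∈ range N, r j
  have hL0 : 0 ≤ L := sum_nonneg fun j _ => hr0 j
  -- large enough that `D * exp (-r j) ≥ L + 1` on the small states `j < N`
  set D := (L + 1) * Real.exp L
  have hD : 0 ≤ D := by positivity
  refine ⟨D, hD, fun j hj => ?_⟩
  have hexp : 0 < Real.exp (-r j) := Real.exp_pos _
  rcases le_or_gt N j with hjN | hjN
  · have hj' : (1 : ℝ) ≤ j := by exact_mod_cast hj
    nlinarith [hN j hjN, mul_nonneg (by linarith : (0 : ℝ) ≤ D + 1 / 2) hexp.le]
  · have hrL : r j ≤ L := single_le_sum (fun i _ => hr0 i) (mem_range.2 hjN)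
    have hkill : L + 1 ≤ D * Real.exp (-r j) := by
      rw [mul_assoc, ← Real.exp_add]
      exact le_mul_of_one_le_right (by positivity) (Real.one_le_exp (by linarith))
    nlinarith

section Survival

variable (q : ℕ → ℕ → ℝ≥0∞)

/-- Mass of the paths from `j` that avoid `0` at steps `1, …, M` under the kernel `q`. -/
noncomputable def survivalProb : ℕ → ℕ → ℝ≥0∞
  | 0, _ => 1
  | M + 1, j => ∑' k, q j (k + 1) * survivalProb M (k + 1)

lemma sum_range_survivalProb_succ (M j : ℕ) :
    ∑ i ∈ range M, survivalProb q (i + 1) j =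
      ∑' k, q j (k + 1) * ∑ i ∈ range M, survivalProb q i (k + 1) := by
  simp only [survivalProb, mul_sum]
  exact (Summable.tsum_finsetSum fun _ _ => ENNReal.summable).symm

variable {q}

lemma mul_sum_range_survivalProb_le {V : ℕ → ℝ≥0∞} {c : ℝ≥0∞}
    (hdrift : ∀ j, 1 ≤ j → ∑' k, q j (k + 1) * (V (k + 1) + c) ≤ V j) (M : ℕ) :
    ∀ j, 1 ≤ j → c * ∑ i ∈ range M, survivalProb q (i + 1) j ≤ V j := by
  induction M with
  | zero => simp
  | succ M ih =>
    intro j hj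
    calc c * ∑ i ∈ range (M + 1), survivalProb q (i + 1) j
        = ∑' k, q j (k + 1) * (c * ∑ i ∈ range M, survivalProb q (i + 1) (k + 1) + c) := by
          rw [sum_range_survivalProb_succ, ← ENNReal.tsum_mul_left]
          refine tsum_congr fun k => ?_
          rw [sum_range_succ', survivalProb]
          ring
      _ ≤ ∑' k, q j (k + 1) * (V (k + 1) + c) := by
          gcongr with k
          exact ih (k + 1) le_add_self
      _ ≤ V j := hdrift j hj

end Survival

lemma ENNReal.eq_zero_of_forall_natCast_mul_le {x C : ℝ≥0∞} (hC : C ≠ ∞)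
    (h : ∀ n : ℕ, n * x ≤ C) : x = 0 := by
  by_contra hx
  obtain ⟨n, hn⟩ := ENNReal.exists_nat_mul_gt hx hC
  exact (h n).not_gt hn

lemma setOf_forall_le_succ_update {Ω : Type*} (K : ℕ → Ω → ℕ) (m : ℕ) (p : ℕ → ℕ) (x : ℕ) :
    {ω | ∀ i ≤ m + 1, K i ω = Function.update p (m + 1) x i} =
      {ω | K (m + 1) ω = x ∧ ∀ i ≤ m, K i ω = p i} := by
  ext ω
  simp only [Set.mem_ofPred_eq, Nat.le_succ_iff, or_imp, forall_and, forall_eq]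
  rw [and_comm, Nat.succ_eq_add_one, Function.update_self]
  refine and_congr_right fun _ => forall₂_congr fun i hi => ?_
  rw [Function.update_of_ne (by omega)]

def TransitionsLE {Ω : Type*} [MeasurableSpace Ω] (μ : Measure Ω) (K : ℕ → Ω → ℕ)
    (q : ℕ → ℕ → ℝ≥0∞) : Prop :=
  ∀ m k (hist : ℕ → ℕ), μ {ω | K (m + 1) ω = k ∧ ∀ i ≤ m, K i ω = hist i} ≤
    q (hist m) k * μ {ω | ∀ i ≤ m, K i ω = hist i}

section Chain

variable {Ω : Type*} [MeasurableSpace Ω] {μ : Measure Ω} {K : ℕ → Ω → ℕ} {q : ℕ → ℕ → ℝ≥0∞}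

lemma measure_cylinder_inter_survives_le
    (hK : TransitionsLE μ K q) (M : ℕ) :
    ∀ m (p : ℕ → ℕ), μ {ω | (∀ i ≤ m, K i ω = p i) ∧ ∀ l, m < l → l ≤ m + M → K l ω ≠ 0} ≤
      μ {ω | ∀ i ≤ m, K i ω = p i} * survivalProb q M (p m) := by
  induction M with
  | zero =>
    intro m p
    rw [survivalProb, mul_one]
    exact measure_mono fun ω hω => hω.1
  | succ M ih =>
    intro m p
    set p' : ℕ → ℕ → ℕ := fun k => Function.update p (m + 1) (k + 1)
    have hcover : {ω | (∀ i ≤ m, K i ω = p i) ∧ ∀ l, m < l → l ≤ m + (M + 1) → K l ω ≠ 0} ⊆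
        ⋃ k, {ω | (∀ i ≤ m + 1, K i ω = p' k i) ∧
          ∀ l, m + 1 < l → l ≤ m + 1 + M → K l ω ≠ 0} := by
      rintro ω ⟨hhist, hsurv⟩
      obtain ⟨k, hk⟩ := Nat.exists_eq_succ_of_ne_zero (hsurv (m + 1) (by omega) (by omega))
      refine Set.mem_iUnion.2 ⟨k, ?_, fun l hl hl' => hsurv l (by omega) (by omega)⟩
      have hmem : ω ∈ {ω | K (m + 1) ω = k + 1 ∧ ∀ i ≤ m, K i ω = p i} := ⟨hk, hhist⟩
      rwa [← setOf_forall_le_succ_update] at hmem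
    calc _ ≤ ∑' k, μ {ω | (∀ i ≤ m + 1, K i ω = p' k i) ∧
          ∀ l, m + 1 < l → l ≤ m + 1 + M → K l ω ≠ 0} := (measure_mono hcover).trans
            (measure_iUnion_le _)
      _ ≤ ∑' k, q (p m) (k + 1) * μ {ω | ∀ i ≤ m, K i ω = p i} *
            survivalProb q M (k + 1) := by
          gcongr with k
          refine (ih (m + 1) (p' k)).trans ?_
          simp only [p', Function.update_self, setOf_forall_le_succ_update]
          gcongr
          exact hK m (k + 1) p
      _ = μ {ω | ∀ i ≤ m, K i ω = p i} * survivalProb q (M + 1) (p m) := by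
          rw [survivalProb, ← ENNReal.tsum_mul_left]
          exact tsum_congr fun k => by ring

lemma measure_start_forall_ne_zero_le_survivalProb [IsProbabilityMeasure μ]
    (hK : TransitionsLE μ K q) (j M : ℕ) :
    μ {ω | K 0 ω = j ∧ ∀ m, K m ω ≠ 0} ≤ survivalProb q M j :=
  calc _ ≤ μ {ω | (∀ i ≤ 0, K i ω = j) ∧ ∀ l, 0 < l → l ≤ 0 + M → K l ω ≠ 0} :=
        measure_mono fun ω hω => ⟨fun i hi => by rw [Nat.le_zero.1 hi]; exact hω.1,
          fun l _ _ => hω.2 l⟩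
    _ ≤ μ {ω | ∀ i ≤ 0, K i ω = j} * survivalProb q M j :=
        measure_cylinder_inter_survives_le hK M 0 fun _ => j
    _ ≤ survivalProb q M j := mul_le_of_le_one_left' prob_le_one

lemma measure_forall_ne_zero_of_drift [IsProbabilityMeasure μ]
    (hK : TransitionsLE μ K q)
    {V : ℕ → ℝ≥0∞} {c : ℝ≥0∞} (hV : ∀ j, V j ≠ ∞) (hc : c ≠ 0)
    (hdrift : ∀ j, 1 ≤ j → ∑' k, q j (k + 1) * (V (k + 1) + c) ≤ V j) :
    μ {ω | ∀ m, K m ω ≠ 0} = 0 := by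
  have hcover : {ω | ∀ m, K m ω ≠ 0} ⊆ ⋃ j, {ω | K 0 ω = j + 1 ∧ ∀ m, K m ω ≠ 0} :=
    fun ω hω => Set.mem_iUnion.2 ⟨K 0 ω - 1, by have := hω 0; omega, hω⟩
  refine measure_mono_null hcover (measure_iUnion_null fun j => ?_)
  refine (mul_eq_zero.1 (ENNReal.eq_zero_of_forall_natCast_mul_le (hV (j + 1))
    fun M => ?_)).resolve_left hc
  calc (M : ℝ≥0∞) * (c * μ _)
      = c * ∑ _i ∈ range M, μ {ω | K 0 ω = j + 1 ∧ ∀ m, K m ω ≠ 0} := by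
        rw [sum_const, card_range, nsmul_eq_mul]; ring
    _ ≤ c * ∑ i ∈ range M, survivalProb q (i + 1) (j + 1) := by
        gcongr with i
        exact measure_start_forall_ne_zero_le_survivalProb hK (j + 1) (i + 1)
    _ ≤ V (j + 1) := mul_sum_range_survivalProb_le hdrift M (j + 1) le_add_self

lemma measure_exists_eq_zero_eq_one_of_drift [IsProbabilityMeasure μ]
    (hK : TransitionsLE μ K q)
    {V : ℕ → ℝ≥0∞} {c : ℝ≥0∞} (hV : ∀ j, V j ≠ ∞) (hc : c ≠ 0)
    (hdrift : ∀ j, 1 ≤ j → ∑' k, q j (k + 1) * (V (k + 1) + c) ≤ V j) :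
    μ {ω | ∃ m, K m ω = 0} = 1 := by
  refine le_antisymm prob_le_one ?_
  have hcompl : {ω | ∃ m, K m ω = 0}ᶜ = {ω | ∀ m, K m ω ≠ 0} := by
    ext ω; simp
  simpa [hcompl, measure_forall_ne_zero_of_drift hK hV hc hdrift] using
    measure_univ_le_add_compl (μ := μ) {ω | ∃ m, K m ω = 0}

end Chain

theorem cibp_terminates_general (α β : ℝ) (hα : 0 < α) (hβ : 0 < β)
    {Ω : Type*} [MeasurableSpace Ω] (μ : Measure Ω) [IsProbabilityMeasure μ]
    (K : ℕ → Ω → ℕ)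
    (hMarkov : ∀ (m : ℕ) (k : ℕ) (hist : ℕ → ℕ),
      μ {ω | K (m + 1) ω = k ∧ ∀ i ≤ m, K i ω = hist i} =
        ENNReal.ofReal (poisProb (cibpLam α β (hist m)) k) *
          μ {ω | ∀ i ≤ m, K i ω = hist i}) :
    μ {ω | ∃ m, K m ω = 0} = 1 := by
  obtain ⟨D, hD, hlam⟩ :=
    exists_drift_const (cibpLam_nonneg hα.le hβ.le) (eventually_cibpLam_le_half α β)
  refine measure_exists_eq_zero_eq_one_of_drift
    (q := fun j k => ENNReal.ofReal (poisProb (cibpLam α β j) k))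
    (fun m k hist => (hMarkov m k hist).le)
    (V := fun j => ENNReal.ofReal (j + D)) (c := ENNReal.ofReal (1 / 2))
    (fun _ => ENNReal.ofReal_ne_top) (by norm_num) fun j hj => ?_
  rw [tsum_ofReal_poisProb_succ_mul (cibpLam_nonneg hα.le hβ.le j) hD (by norm_num)]
  exact ENNReal.ofReal_le_ofReal (hlam j hj)

/-- CIBP termination with constant parameters: a Markov chain on `ℕ` whose
transition distribution from state `j` is Poisson with mean `λ(j)` is absorbed
at `0` with probability one. The Markov property is expressed via
finite-dimensional distributions. -/
theorem cibp_terminates (α β : ℝ) (hα : 0 < α) (hβ : 0 < β)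
    {Ω : Type*} [MeasurableSpace Ω] (μ : Measure Ω) [IsProbabilityMeasure μ]
    (K : ℕ → Ω → ℕ) (hmeas : ∀ m, Measurable (K m))
    (hMarkov : ∀ (m : ℕ) (k : ℕ) (hist : ℕ → ℕ),
      μ {ω | K (m + 1) ω = k ∧ ∀ i ≤ m, K i ω = hist i} =
        ENNReal.ofReal (poisProb (cibpLam α β (hist m)) k) *
          μ {ω | ∀ i ≤ m, K i ω = hist i}) :
    μ {ω | ∃ m, K m ω = 0} = 1 :=
  cibp_terminates_general α β hα hβ μ K hMarkov
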